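/- arXiv:2001.11703 — 4 statements merged into one kernel-verified Lean document; each statement's English description precedes it below -/
import Mathlib

section
/- Let D be a digraph of order n and let W ⊆ V(D) with n ≥ 2|W|. If δ⁰(W) ≥ n/2 + |W| − 1, then for every integer k ≥ 1 and every positive integer partition |W| = n_1 + ⋯ + n_k with n_i ≥ 2 for each i, D contains k pairwise vertex-disjoint directed cycles C_1, …, C_k such that each C_i contains exactly n_i vertices of W (|V(C_i) ∩ W| = n_i). -/
/-!
For `a ≠ b` in `W` the degree bound gives `d⁺(a) + d⁻(b) ≥ n + 2|W| - 2`, so there are at least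
`2|W| - 2` vertices `x` with `a → x → b`; as there are no loops, none of them is `a` or `b`, so at
most `|W| - 2` of them lie in `W`, and at least `|W|` lie outside `W`. Arrange `W` in `k` cyclic
blocks `w_{i,0}, …, w_{i,nᵢ-1}`. Each of the `|W|` consecutive pairs `(w_{i,t}, w_{i,t+1})` then has
at least `|W|` middle vertices outside `W`, so Hall's theorem picks distinct middles `x_{i,t}`, and
block `i` yields the cycle `w_{i,0} x_{i,0} w_{i,1} x_{i,1} ⋯ w_{i,nᵢ-1} x_{i,nᵢ-1}`.
-/

noncomputable def outDeg {V : Type*} (A : V → V → Prop) (v : V) : ℕ :=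
  {w | A v w}.ncard

noncomputable def inDeg {V : Type*} (A : V → V → Prop) (v : V) : ℕ :=
  {w | A w v}.ncard

/-- `l` is the (nonrepeating) vertex list of a directed cycle of the digraph
with arc relation `A`; directed cycles have at least two vertices. -/
def IsDicycle {V : Type*} (A : V → V → Prop) (l : List V) : Prop :=
  2 ≤ l.length ∧ l.Nodup ∧
    ∀ i : Fin l.length,
      A (l.get i) (l.get ⟨((i : ℕ) + 1) % l.length, Nat.mod_lt _ i.pos⟩)

open Finset Function

theorem Finset.exists_injective_of_card_le_card {ι α : Type*} [Fintype ι] [DecidableEq α]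
    (t : ι → Finset α) (ht : ∀ i, Fintype.card ι ≤ (t i).card) :
    ∃ f : ι → α, Injective f ∧ ∀ i, f i ∈ t i := by
  refine (all_card_le_biUnion_card_iff_exists_injective t).mp fun s => ?_
  obtain rfl | ⟨i, hi⟩ := s.eq_empty_or_nonempty
  · simp
  · calc #s ≤ Fintype.card ι := card_le_univ s
      _ ≤ #(t i) := ht i
      _ ≤ #(s.biUnion t) := card_le_card (subset_biUnion_of_mem t hi)

theorem val_finRotate {n : ℕ} (i : Fin n) : (finRotate n i : ℕ) = (i + 1) % n := by
  have := i.neZero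
  rw [finRotate_apply, Fin.val_add, Fin.val_one']
  simp [Nat.add_mod]

theorem finRotate_ne_self {n : ℕ} (hn : 2 ≤ n) (i : Fin n) : finRotate n i ≠ i :=
  Equiv.Perm.mem_support.mp (by simp [support_finRotate_of_le hn])

section Interleave

variable {V : Type*} {m : ℕ}

def interleave (u v : Fin m → V) (t : Fin (2 * m)) : V :=
  if t.val % 2 = 0 then u ⟨t / 2, by omega⟩ else v ⟨t / 2, by omega⟩

theorem interleave_two_mul (u v : Fin m → V) (s : Fin m) :
    interleave u v ⟨2 * s, by omega⟩ = u s := by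
  simp [interleave]

theorem interleave_two_mul_add_one (u v : Fin m → V) (s : Fin m) :
    interleave u v ⟨2 * s + 1, by omega⟩ = v s := by
  simp only [interleave]
  rw [if_neg (by omega)]
  exact congrArg v (Fin.ext (by simp only; omega))

theorem Fin.exists_eq_two_mul_or_eq_two_mul_add_one (t : Fin (2 * m)) :
    ∃ s : Fin m, t = ⟨2 * s, by omega⟩ ∨ t = ⟨2 * s + 1, by omega⟩ :=
  ⟨⟨t / 2, by omega⟩, by rcases Nat.even_or_odd' t with ⟨s, h | h⟩ <;> simp [Fin.ext_iff] <;> omega⟩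

theorem range_interleave (u v : Fin m → V) :
    Set.range (interleave u v) = Set.range u ∪ Set.range v := by
  ext x
  constructor
  · rintro ⟨t, rfl⟩
    obtain ⟨s, rfl | rfl⟩ := Fin.exists_eq_two_mul_or_eq_two_mul_add_one t
    · exact .inl ⟨s, (interleave_two_mul u v s).symm⟩
    · exact .inr ⟨s, (interleave_two_mul_add_one u v s).symm⟩
  · rintro (⟨s, rfl⟩ | ⟨s, rfl⟩)
    · exact ⟨_, interleave_two_mul u v s⟩
    · exact ⟨_, interleave_two_mul_add_one u v s⟩

theorem interleave_injective {u v : Fin m → V} (hu : Injective u) (hv : Injective v)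
    (huv : ∀ s t, u s ≠ v t) : Injective (interleave u v) := by
  intro t t' h
  obtain ⟨s, rfl | rfl⟩ := Fin.exists_eq_two_mul_or_eq_two_mul_add_one t <;>
  obtain ⟨s', rfl | rfl⟩ := Fin.exists_eq_two_mul_or_eq_two_mul_add_one t' <;>
  simp only [interleave_two_mul, interleave_two_mul_add_one] at h
  · rw [hu h]
  · exact absurd h (huv s s')
  · exact absurd h.symm (huv s' s)
  · rw [hv h]

theorem interleave_finRotate (u v : Fin m → V) (t : Fin (2 * m)) :
    (∃ s, interleave u v t = u s ∧ interleave u v (finRotate _ t) = v s) ∨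
    (∃ s, interleave u v t = v s ∧ interleave u v (finRotate _ t) = u (finRotate m s)) := by
  obtain ⟨s, rfl | rfl⟩ := Fin.exists_eq_two_mul_or_eq_two_mul_add_one t
  · refine .inl ⟨s, interleave_two_mul u v s, ?_⟩
    rw [← interleave_two_mul_add_one u v s]
    congr 1
    ext
    rw [val_finRotate]
    exact Nat.mod_eq_of_lt (by simp only; omega)
  · refine .inr ⟨s, interleave_two_mul_add_one u v s, ?_⟩
    rw [← interleave_two_mul u v (finRotate m s)]
    congr 1
    ext
    simp only [val_finRotate]
    rw [← Nat.mul_mod_mul_left, Nat.mul_add]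

end Interleave

section Dicycle

variable {V : Type*} {A : V → V → Prop}

theorem isDicycle_ofFn {n : ℕ} {f : Fin n → V} (hn : 2 ≤ n) (hf : Injective f)
    (harc : ∀ t, A (f t) (f (finRotate n t))) : IsDicycle A (List.ofFn f) := by
  refine ⟨by simpa using hn, List.nodup_ofFn.mpr hf, fun i => ?_⟩
  have := harc (i.cast List.length_ofFn)
  simp only [List.get_eq_getElem, List.getElem_ofFn]
  convert this using 3 <;> simp only [List.length_ofFn, val_finRotate, Fin.val_cast]

theorem isDicycle_ofFn_interleave {m : ℕ} {u v : Fin m → V} (hm : 1 ≤ m) (hu : Injective u)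
    (hv : Injective v) (huv : ∀ s t, u s ≠ v t) (hout : ∀ s, A (u s) (v s))
    (hin : ∀ s, A (v s) (u (finRotate m s))) : IsDicycle A (List.ofFn (interleave u v)) := by
  refine isDicycle_ofFn (by omega) (interleave_injective hu hv huv) fun t => ?_
  obtain ⟨s, h, h'⟩ | ⟨s, h, h'⟩ := interleave_finRotate u v t
  · rw [h, h']; exact hout s
  · rw [h, h']; exact hin s

end Dicycle

section Middles

variable {V : Type*} [Fintype V] {A : V → V → Prop} [DecidableRel A]

theorem outDeg_eq_card (v : V) : outDeg A v = #{w | A v w} := by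
  simp [outDeg, ← Set.ncard_coe_finset]

theorem inDeg_eq_card (v : V) : inDeg A v = #{w | A w v} := by
  simp [inDeg, ← Set.ncard_coe_finset]

variable (A) in
def middles (a b : V) : Finset V := {x | A a x ∧ A x b}

@[simp]
theorem mem_middles {a b x : V} : x ∈ middles A a b ↔ A a x ∧ A x b := by
  simp [middles]

theorem card_le_card_middles_sdiff [DecidableEq V] (hA : ∀ v, ¬ A v v) {W : Finset V} {a b : V}
    (ha : a ∈ W) (hb : b ∈ W) (hab : a ≠ b)
    (hdeg : Fintype.card V + 2 * #W ≤ outDeg A a + inDeg A b + 2) :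
    #W ≤ #(middles A a b \ W) := by
  rw [outDeg_eq_card, inDeg_eq_card] at hdeg
  set S : Finset V := {x | A a x}
  set T : Finset V := {x | A x b}
  have hST : middles A a b = S ∩ T := filter_and _ _ _
  have hunion : #(S ∪ T) ≤ Fintype.card V := card_le_univ _
  have hW : middles A a b ∩ W ⊆ (W.erase a).erase b := by
    intro x hx
    obtain ⟨⟨hax, hxb⟩, hxW⟩ := by simpa using hx
    exact mem_erase.mpr ⟨fun h => hA b (h ▸ hxb), mem_erase.mpr ⟨fun h => hA a (h ▸ hax), hxW⟩⟩
  have hWab : #((W.erase a).erase b) + 1 + 1 = #W := by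
    rw [card_erase_add_one (mem_erase.mpr ⟨hab.symm, hb⟩), card_erase_add_one ha]
  have hinter := card_union_add_card_inter S T
  have hsplit := card_sdiff_add_card_inter (middles A a b) W
  have hWcap := card_le_card hW
  rw [← hST] at hinter
  omega

end Middles

theorem exists_dicycles_of_interleave {V : Type*} [DecidableEq V] {A : V → V → Prop}
    {W : Finset V} {k : ℕ} {m : Fin k → ℕ} (hm : ∀ i, 1 ≤ m i) {w x : (Σ i, Fin (m i)) → V}
    (hw : Injective w) (hx : Injective x) (hwW : ∀ j, w j ∈ W) (hxW : ∀ j, x j ∉ W)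
    (hout : ∀ j, A (w j) (x j)) (hin : ∀ i t, A (x ⟨i, t⟩) (w ⟨i, finRotate _ t⟩)) :
    ∃ c : Fin k → List V,
      (∀ i, IsDicycle A (c i)) ∧
      (∀ i j, i ≠ j → ∀ v ∈ c i, v ∉ c j) ∧
      (∀ i, ((c i).toFinset ∩ W).card = m i) := by
  have hwx : ∀ j j', w j ≠ x j' := fun j j' h => hxW j' (h ▸ hwW j)
  let c i := List.ofFn (interleave (fun t => w ⟨i, t⟩) (fun t => x ⟨i, t⟩))
  have hmem : ∀ i v, v ∈ c i ↔ (∃ t, w ⟨i, t⟩ = v) ∨ ∃ t, x ⟨i, t⟩ = v := fun i v => by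
    rw [List.mem_ofFn, ← Set.mem_range, range_interleave]
    rfl
  refine ⟨c, fun i => ?_, fun i j hij v hvi hvj => ?_, fun i => ?_⟩
  · exact isDicycle_ofFn_interleave (hm i) (hw.comp sigma_mk_injective)
      (hx.comp sigma_mk_injective) (fun _ _ => hwx _ _) (fun _ => hout _) (hin i)
  · rcases (hmem i v).mp hvi with ⟨s, rfl⟩ | ⟨s, rfl⟩ <;>
      rcases (hmem j _).mp hvj with ⟨t, h⟩ | ⟨t, h⟩
    · exact hij (congrArg Sigma.fst (hw h)).symm
    · exact hwx _ _ h.symm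
    · exact hwx _ _ h
    · exact hij (congrArg Sigma.fst (hx h)).symm
  · have himage : (c i).toFinset ∩ W = univ.image (fun t => w ⟨i, t⟩) := by
      ext v
      simp only [mem_inter, List.mem_toFinset, hmem, mem_image, mem_univ, true_and]
      constructor
      · rintro ⟨⟨t, rfl⟩ | ⟨t, rfl⟩, hvW⟩
        · exact ⟨t, rfl⟩
        · exact absurd hvW (hxW _)
      · rintro ⟨t, rfl⟩
        exact ⟨.inl ⟨t, rfl⟩, hwW _⟩
    rw [himage, card_image_of_injective _ (f := fun t => w ⟨i, t⟩) (hw.comp sigma_mk_injective),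
      card_univ, Fintype.card_fin]

theorem stmt2_general {V : Type*} [Fintype V] [DecidableEq V]
    (A : V → V → Prop) (hloopless : Irreflexive A)
    (W : Finset V)
    (hdeg : ∀ v ∈ W,
      (Fintype.card V : ℚ) / 2 + (W.card : ℚ) - 1 ≤ (outDeg A v : ℚ) ∧
      (Fintype.card V : ℚ) / 2 + (W.card : ℚ) - 1 ≤ (inDeg A v : ℚ))
    (k : ℕ) (m : Fin k → ℕ) (hm : ∀ i, 2 ≤ m i)
    (hsum : ∑ i, m i = W.card) :
    ∃ c : Fin k → List V,
      (∀ i, IsDicycle A (c i)) ∧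
      (∀ i j, i ≠ j → ∀ v ∈ c i, v ∉ c j) ∧
      (∀ i, ((c i).toFinset ∩ W).card = m i) := by
  classical
  have hdeg₂ : ∀ a ∈ W, ∀ b ∈ W, Fintype.card V + 2 * #W ≤ outDeg A a + inDeg A b + 2 := by
    intro a ha b hb
    have hout := (hdeg a ha).1
    have hin := (hdeg b hb).2
    have hQ : ((Fintype.card V + 2 * #W : ℕ) : ℚ) ≤ ((outDeg A a + inDeg A b + 2 : ℕ) : ℚ) := by
      push_cast
      linarith
    exact_mod_cast hQ
  have hcard : Fintype.card (Σ i, Fin (m i)) = #W := by simp [hsum]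
  let e : (Σ i, Fin (m i)) ≃ W := Fintype.equivOfCardEq (by simpa using hcard)
  let w j : V := e j
  have hw : Injective w := Subtype.val_injective.comp e.injective
  have hne : ∀ i t, w ⟨i, t⟩ ≠ w ⟨i, finRotate _ t⟩ := fun i t h =>
    finRotate_ne_self (hm i) t (sigma_mk_injective (hw h)).symm
  obtain ⟨x, hx, hxmid⟩ := exists_injective_of_card_le_card
    (fun j => middles A (w j) (w ⟨j.1, finRotate _ j.2⟩) \ W) fun ⟨i, t⟩ =>
      hcard ▸ card_le_card_middles_sdiff hloopless (e _).2 (e _).2 (hne i t)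
        (hdeg₂ _ (e _).2 _ (e _).2)
  simp only [mem_sdiff, mem_middles] at hxmid
  exact exists_dicycles_of_interleave (fun i => by have := hm i; omega) hw hx (fun j => (e j).2)
    (fun j => (hxmid j).2) (fun j => (hxmid j).1.1) (fun i t => (hxmid ⟨i, t⟩).1.2)

/-- **Theorem 3.** If `D` is a digraph of order `n ≥ 2|W|` and `W ⊆ V(D)` satisfies
`δ⁰(W) ≥ n/2 + |W| − 1`, then for every `k ≥ 1` and every partition
`|W| = n₁ + ⋯ + n_k` with each `nᵢ ≥ 2`, `D` contains `k` pairwise vertex-disjoint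
directed cycles `C₁, …, C_k` with `|V(Cᵢ) ∩ W| = nᵢ` for each `i`. -/
theorem stmt2 {V : Type*} [Fintype V] [DecidableEq V]
    (A : V → V → Prop) (hloopless : Irreflexive A)
    (W : Finset V) (hn : 2 * W.card ≤ Fintype.card V)
    (hdeg : ∀ v ∈ W,
      (Fintype.card V : ℚ) / 2 + (W.card : ℚ) - 1 ≤ (outDeg A v : ℚ) ∧
      (Fintype.card V : ℚ) / 2 + (W.card : ℚ) - 1 ≤ (inDeg A v : ℚ))
    (k : ℕ) (hk : 1 ≤ k) (m : Fin k → ℕ) (hm : ∀ i, 2 ≤ m i)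
    (hsum : ∑ i, m i = W.card) :
    ∃ c : Fin k → List V,
      (∀ i, IsDicycle A (c i)) ∧
      (∀ i j, i ≠ j → ∀ v ∈ c i, v ∉ c j) ∧
      (∀ i, ((c i).toFinset ∩ W).card = m i) :=
  stmt2_general A hloopless W hdeg k m hm hsum
end

section
/- Let D be a digraph of order n and let W ⊆ V(D) with δ⁰(W) ≥ n/2. Then for any two distinct vertices u, v ∈ W, there exist a directed path P_1 of length at most 2 from u to v and a directed path P_2 of length at most 2 from v to u such that P_1 and P_2 are internally vertex-disjoint. -/
section ShortPaths

variable {V : Type*} {A : V → V → Prop}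

lemma two_le_ncard_commonNeighbors [Finite V] (hA : Irreflexive A) {x y : V} (hxy : x ≠ y)
    (hnxy : ¬ A x y) (hdeg : Nat.card V ≤ outDeg A x + inDeg A y) :
    2 ≤ {w | A x w ∧ A w y}.ncard := by
  set S := {w | A x w}
  set T := {w | A w y}
  have hST : S ∪ T ⊆ {x, y}ᶜ := by
    rintro w (hw | hw) <;> simp only [Set.mem_compl_iff, Set.mem_insert_iff,
      Set.mem_singleton_iff, not_or]
    · exact ⟨by rintro rfl; exact hA w hw, by rintro rfl; exact hnxy hw⟩
    · exact ⟨by rintro rfl; exact hnxy hw, by rintro rfl; exact hA w hw⟩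
  have hcompl : 2 + ({x, y}ᶜ : Set V).ncard = Nat.card V := by
    rw [← Set.ncard_pair hxy, Set.ncard_add_ncard_compl]
  have hunion := Set.ncard_union_add_ncard_inter S T
  have := Set.ncard_le_ncard hST
  change Nat.card V ≤ S.ncard + T.ncard at hdeg
  change 2 ≤ (S ∩ T).ncard
  omega

lemma exists_short_isChain_disjoint [Finite V] (hA : Irreflexive A) {x y : V} (hxy : x ≠ y)
    (hdeg : Nat.card V ≤ outDeg A x + inDeg A y) (avoid : List V) (havoid : avoid.length ≤ 1) :
    ∃ mid : List V, mid.length ≤ 1 ∧ mid.Disjoint avoid ∧ (x :: mid ++ [y]).IsChain A := by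
  classical
  by_cases hxy' : A x y
  · exact ⟨[], by simp, by simp, by simpa using hxy'⟩
  have hlt : {w | w ∈ avoid}.ncard < {w | A x w ∧ A w y}.ncard := by
    have : {w | w ∈ avoid}.ncard ≤ avoid.length := by
      rw [← avoid.coe_toFinset, Set.ncard_coe_finset]
      exact avoid.toFinset_card_le
    have := two_le_ncard_commonNeighbors hA hxy hxy' hdeg
    omega
  obtain ⟨w, ⟨hxw, hwy⟩, hw⟩ := Set.exists_mem_notMem_of_ncard_lt_ncard hlt
  exact ⟨[w], by simp, by simpa using hw, by simp [List.isChain_cons_cons, hxw, hwy]⟩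

lemma nodup_of_isChain_of_length_le_one (hA : Irreflexive A) {x y : V} (hxy : x ≠ y)
    {mid : List V} (hmid : mid.length ≤ 1) (hchain : (x :: mid ++ [y]).IsChain A) :
    (x :: mid ++ [y]).Nodup := by
  match mid, hmid with
  | [], _ => simpa using hxy
  | [w], _ =>
    simp only [List.cons_append, List.nil_append, List.isChain_cons_cons,
      List.isChain_singleton, and_true] at hchain
    have hxw : x ≠ w := fun h => hA x (h ▸ hchain.1)
    have hwy : w ≠ y := fun h => hA y (h ▸ hchain.2)
    simp [hxy, hxw, hwy]

end ShortPaths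

lemma card_le_add_of_half_le {n a b : ℕ} (ha : (n : ℚ) / 2 ≤ a) (hb : (n : ℚ) / 2 ≤ b) :
    n ≤ a + b := by
  exact_mod_cast (by linarith : (n : ℚ) ≤ a + b)

/-- **Claim 6.1.** If `D` is a digraph of order `n`, `W ⊆ V(D)` with `δ⁰(W) ≥ n/2`,
then for any two distinct `u, v ∈ W` there are a directed path `P₁` from `u` to `v`
and a directed path `P₂` from `v` to `u`, each of length at most `2` (i.e. with at
most `3` vertices), which are internally vertex-disjoint. -/
theorem stmt11 {V : Type*} [Fintype V] (A : V → V → Prop) (hloopless : Irreflexive A)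
    (W : Finset V)
    (hdeg : ∀ v ∈ W, (Fintype.card V : ℚ) / 2 ≤ (outDeg A v : ℚ) ∧
      (Fintype.card V : ℚ) / 2 ≤ (inDeg A v : ℚ))
    (u v : V) (hu : u ∈ W) (hv : v ∈ W) (huv : u ≠ v) :
    ∃ l₁ l₂ : List V,
      l₁.Nodup ∧ l₁.Chain' A ∧ l₁.head? = some u ∧ l₁.getLast? = some v ∧
        l₁.length ≤ 3 ∧
      l₂.Nodup ∧ l₂.Chain' A ∧ l₂.head? = some v ∧ l₂.getLast? = some u ∧
        l₂.length ≤ 3 ∧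
      (∀ w ∈ l₁, w ∈ l₂ → w = u ∨ w = v) := by
  obtain ⟨hu_out, hu_in⟩ := hdeg u hu
  obtain ⟨hv_out, hv_in⟩ := hdeg v hv
  rw [← Nat.card_eq_fintype_card] at hu_out hu_in hv_out hv_in
  obtain ⟨mid₁, hlen₁, -, hchain₁⟩ := exists_short_isChain_disjoint hloopless huv
    (card_le_add_of_half_le hu_out hv_in) [] (by simp)
  obtain ⟨mid₂, hlen₂, hdisj, hchain₂⟩ := exists_short_isChain_disjoint hloopless huv.symm
    (card_le_add_of_half_le hv_out hu_in) mid₁ hlen₁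
  refine ⟨u :: mid₁ ++ [v], v :: mid₂ ++ [u],
    nodup_of_isChain_of_length_le_one hloopless huv hlen₁ hchain₁, hchain₁, by simp,
    List.getLast?_concat, by simp; omega,
    nodup_of_isChain_of_length_le_one hloopless huv.symm hlen₂ hchain₂, hchain₂, by simp,
    List.getLast?_concat, by simp; omega, ?_⟩
  intro w hw₁ hw₂
  simp only [List.mem_append, List.mem_cons, List.not_mem_nil, or_false] at hw₁ hw₂
  rcases hw₁ with (rfl | hw₁) | rfl
  · exact .inl rfl
  · rcases hw₂ with (rfl | hw₂) | rfl
    · exact .inr rfl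
    · exact (hdisj hw₂ hw₁).elim
    · exact .inl rfl
  · exact .inr rfl
end

section
/- For every integer k ≥ 1, there exists a digraph D of order n = 16k − 2 with δ⁰(D) = 12k − 3 (so δ⁰(D) > (3n−3)/4 − 1) such that D does not contain 8k − 1 pairwise vertex-disjoint directed cycles of order 2. Consequently, the minimum semi-degree bound (3n−3)/4 for the existence of an arbitrary cycle-factor cannot be weakened by one. -/
/-- The minimum semi-degree `δ⁰(D) = min {δ⁺(D), δ⁻(D)}` of the digraph with arc
relation `A`. -/
noncomputable def minSemiDeg {V : Type*} (A : V → V → Prop) : ℕ :=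
  sInf (Set.range (outDeg A) ∪ Set.range (inDeg A))

/-!
Let `R` be the Cayley digraph of `ℤ/8k` with connection set `{1, …, 4k - 1}`: since this set is
disjoint from its negative, `R` contains no digon, and every vertex of `R` has in- and out-degree
`4k - 1`. Adding `8k - 2` vertices joined in both directions to every other vertex gives a digraph
on `16k - 2` vertices with minimum semi-degree `(4k - 1) + (8k - 2) = 12k - 3`. Now `8k - 1`
disjoint digons would cover all `16k - 2` vertices, yet each contains at most one of the `8k`
vertices of `R`.
-/

open Finset Function

section Degrees

variable {V W : Type*}

theorem inDeg_eq_outDeg_flip (A : V → V → Prop) (v : V) : inDeg A v = outDeg (flip A) v := rfl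

theorem outDeg_lt_card [Finite V] {A : V → V → Prop} (hA : Irreflexive A) (v : V) :
    outDeg A v < Nat.card V :=
  Set.ncard_lt_card fun h => hA v (h.symm ▸ Set.mem_univ v : v ∈ {w | A v w})

theorem minSemiDeg_eq_of_le {A : V → V → Prop} {n : ℕ} (hout : ∀ v, n ≤ outDeg A v)
    (hin : ∀ v, n ≤ inDeg A v) (v : V) (hv : outDeg A v = n) : minSemiDeg A = n := by
  have hn : n ∈ Set.range (outDeg A) ∪ Set.range (inDeg A) := Or.inl ⟨v, hv⟩
  refine le_antisymm (Nat.sInf_le hn) (le_csInf ⟨n, hn⟩ ?_)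
  rintro _ (⟨u, rfl⟩ | ⟨u, rfl⟩)
  exacts [hout u, hin u]

theorem outDeg_onFun_equiv (A : W → W → Prop) (e : V ≃ W) (v : V) :
    outDeg (A on e) v = outDeg A (e v) :=
  Set.ncard_preimage_of_injective_subset_range e.injective (e.range_eq_univ ▸ Set.subset_univ _)

theorem inDeg_onFun_equiv (A : W → W → Prop) (e : V ≃ W) (v : V) :
    inDeg (A on e) v = inDeg A (e v) :=
  outDeg_onFun_equiv (flip A) e v

theorem minSemiDeg_onFun_equiv (A : W → W → Prop) (e : V ≃ W) :
    minSemiDeg (A on e) = minSemiDeg A := by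
  have hout : outDeg (A on e) = outDeg A ∘ e := funext (outDeg_onFun_equiv A e)
  have hin : inDeg (A on e) = inDeg A ∘ e := funext (inDeg_onFun_equiv A e)
  rw [minSemiDeg, minSemiDeg, hout, hin, EquivLike.range_comp, EquivLike.range_comp]

end Degrees

section AddUniversal

variable {W K : Type*}

def addUniversal (R : W → W → Prop) : W ⊕ K → W ⊕ K → Prop
  | .inl a, .inl b => R a b
  | .inl _, .inr _ => True
  | .inr _, .inl _ => True
  | .inr c, .inr d => c ≠ d

theorem flip_addUniversal (R : W → W → Prop) :
    flip (addUniversal R : W ⊕ K → W ⊕ K → Prop) = addUniversal (flip R) := by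
  funext x y
  cases x <;> cases y <;> simp [addUniversal, flip, ne_comm]

theorem irreflexive_addUniversal {R : W → W → Prop} (hR : Irreflexive R) :
    Irreflexive (addUniversal R : W ⊕ K → W ⊕ K → Prop) := by
  rintro (a | c)
  exacts [hR a, fun h => h rfl]

variable [Finite W] [Finite K]

theorem outDeg_addUniversal_inl (R : W → W → Prop) (a : W) :
    outDeg (addUniversal R : W ⊕ K → W ⊕ K → Prop) (.inl a) = outDeg R a + Nat.card K := by
  have hN : {y | addUniversal R (.inl a) y} =
      Sum.inl '' {b | R a b} ∪ Set.range (Sum.inr : K → W ⊕ K) := by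
    ext (b | c) <;> simp [addUniversal]
  rw [outDeg, hN, Set.ncard_union_eq (by simp [Set.disjoint_left]),
    Set.ncard_image_of_injective _ Sum.inl_injective,
    Set.ncard_range_of_injective Sum.inr_injective, outDeg]

theorem outDeg_addUniversal_inr (R : W → W → Prop) (c : K) :
    outDeg (addUniversal R : W ⊕ K → W ⊕ K → Prop) (.inr c) =
      Nat.card W + Nat.card K - 1 := by
  have hN : {y | addUniversal R (.inr c) y} = {Sum.inr c}ᶜ := by
    ext (b | d) <;> simp [addUniversal, ne_comm]
  rw [outDeg, hN, Set.ncard_compl, Set.ncard_singleton, Nat.card_sum]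

theorem inDeg_addUniversal_inl (R : W → W → Prop) (a : W) :
    inDeg (addUniversal R : W ⊕ K → W ⊕ K → Prop) (.inl a) = inDeg R a + Nat.card K := by
  rw [inDeg_eq_outDeg_flip, flip_addUniversal, outDeg_addUniversal_inl]; rfl

theorem inDeg_addUniversal_inr (R : W → W → Prop) (c : K) :
    inDeg (addUniversal R : W ⊕ K → W ⊕ K → Prop) (.inr c) =
      Nat.card W + Nat.card K - 1 := by
  rw [inDeg_eq_outDeg_flip, flip_addUniversal, outDeg_addUniversal_inr]

theorem minSemiDeg_addUniversal [Nonempty W] {R : W → W → Prop} (hR : Irreflexive R) {r : ℕ}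
    (hout : ∀ a, outDeg R a = r) (hin : ∀ a, inDeg R a = r) :
    minSemiDeg (addUniversal R : W ⊕ K → W ⊕ K → Prop) = r + Nat.card K := by
  obtain ⟨a⟩ := ‹Nonempty W›
  have hr : r < Nat.card W := hout a ▸ outDeg_lt_card hR a
  refine minSemiDeg_eq_of_le ?_ ?_ (.inl a) (by rw [outDeg_addUniversal_inl, hout])
  · rintro (b | c)
    · rw [outDeg_addUniversal_inl, hout]
    · rw [outDeg_addUniversal_inr]; omega
  · rintro (b | c)
    · rw [inDeg_addUniversal_inl, hin]
    · rw [inDeg_addUniversal_inr]; omega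

end AddUniversal

section Cayley

variable {G : Type*} [AddGroup G]

def cayley (S : Set G) (a b : G) : Prop := b - a ∈ S

theorem irreflexive_cayley {S : Set G} (hS : (0 : G) ∉ S) : Irreflexive (cayley S) := fun a h =>
  hS (by simpa [cayley] using h)

theorem not_cayley_of_cayley {S : Set G} (hS : ∀ s ∈ S, -s ∉ S) {a b : G} (h : cayley S a b) :
    ¬ cayley S b a := by
  simpa [cayley] using hS _ h

theorem outDeg_cayley (S : Set G) (a : G) : outDeg (cayley S) a = S.ncard :=
  Set.ncard_preimage_of_injective_subset_range (sub_left_injective (b := a))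
    ((Equiv.subRight a).range_eq_univ ▸ Set.subset_univ _)

theorem inDeg_cayley (S : Set G) (b : G) : inDeg (cayley S) b = S.ncard :=
  Set.ncard_preimage_of_injective_subset_range (sub_right_injective (b := b))
    ((Equiv.subLeft b).range_eq_univ ▸ Set.subset_univ _)

end Cayley

section PosHalf

def posHalf (m : ℕ) : Set (ZMod (2 * m)) := Nat.cast '' Set.Ico 1 m

theorem natCast_ne_zero_of_pos_of_lt {m n : ℕ} (h0 : 0 < n) (hn : n < m) : (n : ZMod m) ≠ 0 :=
  (ZMod.natCast_eq_zero_iff n m).not.mpr (Nat.not_dvd_of_pos_of_lt h0 hn)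

theorem ncard_posHalf (m : ℕ) : (posHalf m).ncard = m - 1 := by
  rw [posHalf, Set.InjOn.ncard_image, Set.ncard_Ico_nat]
  intro a ha b hb hab
  rw [ZMod.natCast_eq_natCast_iff' a b (2 * m)] at hab
  simp only [Set.mem_Ico] at ha hb
  rwa [Nat.mod_eq_of_lt (by omega), Nat.mod_eq_of_lt (by omega)] at hab

theorem zero_notMem_posHalf (m : ℕ) : (0 : ZMod (2 * m)) ∉ posHalf m := by
  rintro ⟨d, hd, h⟩
  simp only [Set.mem_Ico] at hd
  exact natCast_ne_zero_of_pos_of_lt (by omega) (by omega) h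

theorem neg_notMem_posHalf (m : ℕ) : ∀ s ∈ posHalf m, -s ∉ posHalf m := by
  rintro _ ⟨d, hd, rfl⟩ ⟨e, he, h⟩
  simp only [Set.mem_Ico] at hd he
  refine natCast_ne_zero_of_pos_of_lt (m := 2 * m) (n := e + d) (by omega) (by omega) ?_
  rw [Nat.cast_add, h, neg_add_cancel]

end PosHalf

section Digons

variable {V : Type*} {A : V → V → Prop}

theorem IsDicycle.exists_eq_pair {l : List V} (hl : IsDicycle A l) (h2 : l.length = 2) :
    ∃ x y, l = [x, y] ∧ A x y ∧ A y x := by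
  obtain ⟨x, y, rfl⟩ := List.length_eq_two.mp h2
  obtain ⟨-, -, h⟩ := hl
  exact ⟨x, y, rfl, by simpa using h ⟨0, by simp⟩, by simpa using h ⟨1, by simp⟩⟩

variable [DecidableEq V]

theorem IsDicycle.card_toFinset_inter_le_one {l : List V} (hl : IsDicycle A l)
    (h2 : l.length = 2) {T : Finset V} (hT : ∀ x ∈ T, ∀ y ∈ T, A x y → ¬ A y x) :
    #(l.toFinset ∩ T) ≤ 1 := by
  obtain ⟨x, y, rfl, hxy, hyx⟩ := hl.exists_eq_pair h2
  refine Finset.card_le_one.mpr fun a ha b hb => ?_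
  simp only [Finset.mem_inter, List.mem_toFinset, List.mem_cons, List.not_mem_nil,
    or_false] at ha hb
  have hxyT : ¬ (x ∈ T ∧ y ∈ T) := fun ⟨hx, hy⟩ => hT x hx y hy hxy hyx
  obtain ⟨rfl | rfl, haT⟩ := ha <;> obtain ⟨rfl | rfl, hbT⟩ := hb <;> tauto

/-- Each digon meets the digon-free set `T` at most once, so `m` disjoint digons use at least
`m` vertices outside `T`. -/
theorem card_add_le_of_disjoint_digons [Fintype V] {T : Finset V}
    (hT : ∀ x ∈ T, ∀ y ∈ T, A x y → ¬ A y x) {m : ℕ} (c : Fin m → List V)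
    (hc : ∀ i, IsDicycle A (c i) ∧ (c i).length = 2)
    (hdisj : ∀ i j, i ≠ j → ∀ v ∈ c i, v ∉ c j) :
    #T + m ≤ Fintype.card V := by
  have hcard i : #(c i).toFinset = 2 := by
    rw [List.toFinset_card_of_nodup (hc i).1.2.1, (hc i).2]
  have hinter : ∑ i, #((c i).toFinset ∩ T) ≤ m := by
    calc ∑ i, #((c i).toFinset ∩ T)
        _ ≤ ∑ _i : Fin m, 1 :=
          Finset.sum_le_sum fun i _ => (hc i).1.card_toFinset_inter_le_one (hc i).2 hT
        _ = m := by simp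
  have houter : ∑ i, #((c i).toFinset \ T) ≤ Fintype.card V - #T := by
    rw [← Finset.card_biUnion, ← Finset.card_compl]
    · exact Finset.card_le_card fun v hv => by
        obtain ⟨i, -, hv⟩ := Finset.mem_biUnion.mp hv
        exact Finset.mem_compl.mpr (Finset.mem_sdiff.mp hv).2
    · intro i _ j _ hij
      refine Finset.disjoint_left.mpr fun v hvi hvj => hdisj i j hij v ?_ ?_
      · exact List.mem_toFinset.mp (Finset.mem_sdiff.mp hvi).1
      · exact List.mem_toFinset.mp (Finset.mem_sdiff.mp hvj).1
  have htotal : ∑ i, (#((c i).toFinset ∩ T) + #((c i).toFinset \ T)) = 2 * m := by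
    simp [Finset.card_inter_add_card_sdiff, hcard, mul_comm]
  rw [Finset.sum_add_distrib] at htotal
  have := Finset.card_le_univ T
  omega

end Digons

/-- **Sharpness of Theorem 1.** For every `k ≥ 1` there is a digraph `D` of order
`n = 16k − 2` with `δ⁰(D) = 12k − 3` (note `12k − 3 > (3n−3)/4 − 1`) which does not
contain `8k − 1` pairwise vertex-disjoint directed cycles of order `2`. -/
theorem stmt15 (k : ℕ) (hk : 1 ≤ k) :
    ∃ A : Fin (16 * k - 2) → Fin (16 * k - 2) → Prop,
      Irreflexive A ∧
      minSemiDeg A = 12 * k - 3 ∧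
      ((3 * (16 * (k : ℚ) - 2) - 3) / 4 - 1 < 12 * (k : ℚ) - 3) ∧
      ¬ ∃ c : Fin (8 * k - 1) → List (Fin (16 * k - 2)),
          (∀ i, IsDicycle A (c i) ∧ (c i).length = 2) ∧
          (∀ i j, i ≠ j → ∀ v ∈ c i, v ∉ c j) := by
  have : NeZero (2 * (4 * k)) := ⟨by omega⟩
  let R : ZMod (2 * (4 * k)) → ZMod (2 * (4 * k)) → Prop := cayley (posHalf (4 * k))
  let D : ZMod (2 * (4 * k)) ⊕ Fin (8 * k - 2) → _ → Prop := addUniversal R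
  have hR : Irreflexive R := irreflexive_cayley (zero_notMem_posHalf _)
  let e : Fin (16 * k - 2) ≃ ZMod (2 * (4 * k)) ⊕ Fin (8 * k - 2) :=
    Fintype.equivOfCardEq (by simp; omega)
  refine ⟨D on e, fun v => irreflexive_addUniversal hR (e v), ?_, by linarith, ?_⟩
  · rw [minSemiDeg_onFun_equiv, minSemiDeg_addUniversal hR (outDeg_cayley _) (inDeg_cayley _),
      ncard_posHalf, Nat.card_fin]
    omega
  · rintro ⟨c, hc, hdisj⟩
    let T := univ.map (Embedding.inl.trans e.symm.toEmbedding)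
    have hT : ∀ x ∈ T, ∀ y ∈ T, (D on e) x y → ¬ (D on e) y x := by
      simp only [T, Finset.mem_map, Finset.mem_univ, true_and]
      rintro _ ⟨a, rfl⟩ _ ⟨b, rfl⟩
      simpa [onFun, D, addUniversal] using not_cayley_of_cayley (neg_notMem_posHalf _)
    have := card_add_le_of_disjoint_digons hT c hc hdisj
    simp [T] at this
    omega
end

section
/- For every integer k ≥ 1, let D be the digraph of order n = 3k with vertex set X ∪ Y, where |X| = 2k − 1 and |Y| = k + 1, such that X induces a complete digraph (both arcs uv and vu present for every pair of distinct vertices u, v ∈ X), Y is an independent set (no arcs between vertices of Y), and all arcs in both directions between every vertex of X and every vertex of Y are present. Then δ⁰(D) = 2k − 1 = 2n/3 − 1, but D does not contain k pairwise vertex-disjoint directed cycles each of order at least 3. -/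
/-- The digraph `D₂` on `X ∪ Y` with `X = K^*_{2k−1}` (a complete digraph),
`Y` an independent set of size `k + 1`, and all arcs in both directions between
`X` and `Y`. -/
def D2 (k : ℕ) : (Fin (2 * k - 1) ⊕ Fin (k + 1)) → (Fin (2 * k - 1) ⊕ Fin (k + 1)) → Prop
  | Sum.inl a, Sum.inl b => a ≠ b
  | Sum.inl _, Sum.inr _ => True
  | Sum.inr _, Sum.inl _ => True
  | Sum.inr _, Sum.inr _ => False

/-!
Since `Y` is independent, of two consecutive vertices of a directed cycle at least one lies in
`X`; on a cycle of order at least `3` this yields two distinct vertices of `X` (one at some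
position `p`, another at `p + 1` or `p + 2`). Hence `k` disjoint such cycles would need `2k`
vertices of `X`, but `|X| = 2k − 1`. The degrees are read off directly: vertices of `Y` have
in- and out-degree `|X| = 2k − 1`, vertices of `X` have `3k − 1`.
-/

variable {V : Type*} {A : V → V → Prop}

lemma minSemiDeg_eq_of_le_s16 {d : ℕ} (hle : ∀ v, d ≤ outDeg A v ∧ d ≤ inDeg A v)
    (hd : ∃ v, outDeg A v = d) : minSemiDeg A = d := by
  have hmem : d ∈ Set.range (outDeg A) ∪ Set.range (inDeg A) := Or.inl hd
  refine le_antisymm (Nat.sInf_le hmem) (le_csInf ⟨d, hmem⟩ ?_)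
  rintro m (⟨v, rfl⟩ | ⟨v, rfl⟩)
  exacts [(hle v).1, (hle v).2]

namespace IsDicycle

lemma adj_get_add_one {l : List V} (hl : IsDicycle A l) [NeZero l.length] (i : Fin l.length) :
    A (l.get i) (l.get (i + 1)) := by
  convert hl.2.2 i using 2
  exact Fin.ext (by simp only [Fin.val_add, Fin.val_one', Nat.add_mod_mod])

lemma exists_ne_mem_of_compl_independent {X : Set V} (hX : ∀ u v, u ∉ X → v ∉ X → ¬ A u v)
    {l : List V} (hl : IsDicycle A l) (h3 : 3 ≤ l.length) :
    ∃ u ∈ l, ∃ v ∈ l, u ≠ v ∧ u ∈ X ∧ v ∈ X := by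
  have : NeZero l.length := ⟨by omega⟩
  have hstep (i : Fin l.length) : l.get i ∈ X ∨ l.get (i + 1) ∈ X := by
    by_contra! h
    exact hX _ _ h.1 h.2 (hl.adj_get_add_one i)
  have hone : (1 : Fin l.length) ≠ 0 := by
    rw [Ne, Fin.ext_iff, Fin.val_one', Fin.val_zero, Nat.one_mod_eq_one.mpr (by omega)]
    omega
  have htwo : (1 + 1 : Fin l.length) ≠ 0 := by
    rw [Ne, Fin.ext_iff, Fin.val_add, Fin.val_one', Fin.val_zero,
      Nat.one_mod_eq_one.mpr (by omega), Nat.mod_eq_of_lt (by omega)]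
    omega
  obtain ⟨p, hp⟩ : ∃ p, l.get p ∈ X := (hstep 0).elim (⟨0, ·⟩) (⟨0 + 1, ·⟩)
  obtain ⟨q, hqp, hq⟩ : ∃ q, q ≠ p ∧ l.get q ∈ X := by
    refine (hstep (p + 1)).elim (⟨p + 1, ?_, ·⟩) (⟨p + 1 + 1, ?_, ·⟩)
    · simpa using hone
    · simpa [add_assoc] using htwo
  exact ⟨_, l.get_mem p, _, l.get_mem q, fun h => hqp (hl.2.1.get_inj_iff.mp h).symm, hp, hq⟩

end IsDicycle

theorem two_mul_card_le_of_disjoint_dicycles [DecidableEq V] {ι : Type*} [Fintype ι]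
    {X : Finset V} (hX : ∀ u v, u ∉ X → v ∉ X → ¬ A u v) (c : ι → List V)
    (hc : ∀ i, IsDicycle A (c i) ∧ 3 ≤ (c i).length)
    (hdisj : ∀ i j, i ≠ j → ∀ v ∈ c i, v ∉ c j) :
    2 * Fintype.card ι ≤ X.card := by
  set F : ι → Finset V := fun i => {v ∈ X | v ∈ c i}
  have hF (i : ι) : 2 ≤ (F i).card := by
    obtain ⟨u, hu, v, hv, huv, huX, hvX⟩ :=
      (hc i).1.exists_ne_mem_of_compl_independent (X := X) hX (hc i).2
    exact Finset.one_lt_card.mpr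
      ⟨u, Finset.mem_filter.mpr ⟨huX, hu⟩, v, Finset.mem_filter.mpr ⟨hvX, hv⟩, huv⟩
  have hFdisj : ((Finset.univ : Finset ι) : Set ι).PairwiseDisjoint F := by
    intro i _ j _ hij
    refine Finset.disjoint_left.mpr fun v hvi hvj => ?_
    exact hdisj i j hij v (Finset.mem_filter.mp hvi).2 (Finset.mem_filter.mp hvj).2
  calc 2 * Fintype.card ι = Fintype.card ι • 2 := by simp [mul_comm]
    _ ≤ ∑ i, (F i).card := Finset.card_nsmul_le_sum _ _ _ fun i _ => hF i
    _ = (Finset.univ.biUnion F).card := (Finset.card_biUnion hFdisj).symm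
    _ ≤ X.card :=
      Finset.card_le_card (Finset.biUnion_subset.mpr fun i _ => Finset.filter_subset _ _)

section D2

variable (k : ℕ)

lemma D2_comm (u v : Fin (2 * k - 1) ⊕ Fin (k + 1)) : D2 k u v ↔ D2 k v u := by
  rcases u with a | a <;> rcases v with b | b <;> simp only [D2]
  exact ne_comm

lemma inDeg_D2 (v : Fin (2 * k - 1) ⊕ Fin (k + 1)) : inDeg (D2 k) v = outDeg (D2 k) v := by
  simp only [inDeg, outDeg, D2_comm k _ v]

lemma outDeg_D2_inl (hk : 1 ≤ k) (a : Fin (2 * k - 1)) :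
    outDeg (D2 k) (Sum.inl a) = 3 * k - 1 := by
  have hnbhd : {w | D2 k (Sum.inl a) w} = {Sum.inl a}ᶜ := by
    ext (b | b) <;> simp [D2, eq_comm]
  rw [outDeg, hnbhd, Set.ncard_compl, Set.ncard_singleton, Nat.card_eq_fintype_card,
    Fintype.card_sum, Fintype.card_fin, Fintype.card_fin]
  omega

lemma outDeg_D2_inr (b : Fin (k + 1)) : outDeg (D2 k) (Sum.inr b) = 2 * k - 1 := by
  have hnbhd : {w | D2 k (Sum.inr b) w} = Set.range Sum.inl := by
    ext (a | a) <;> simp [D2]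
  rw [outDeg, hnbhd, Set.ncard_range_of_injective Sum.inl_injective, Nat.card_eq_fintype_card,
    Fintype.card_fin]

lemma minSemiDeg_D2 (hk : 1 ≤ k) : minSemiDeg (D2 k) = 2 * k - 1 := by
  refine minSemiDeg_eq_of_le_s16 (fun v => ?_) ⟨Sum.inr 0, outDeg_D2_inr k 0⟩
  rw [inDeg_D2, and_self]
  rcases v with a | b
  · rw [outDeg_D2_inl k hk]; omega
  · rw [outDeg_D2_inr]

lemma not_D2_of_notMem_map_inl (u v : Fin (2 * k - 1) ⊕ Fin (k + 1))
    (hu : u ∉ Finset.univ.map Function.Embedding.inl)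
    (hv : v ∉ Finset.univ.map Function.Embedding.inl) : ¬ D2 k u v := by
  rcases u with a | a
  · simp at hu
  · rcases v with b | b
    · simp at hv
    · simp only [D2, not_false_eq_true]

end D2

/-- **Sharpness of Conjecture 8.** For every `k ≥ 1`, the digraph `D₂` of order
`n = 3k` has `δ⁰(D₂) = 2k − 1 = 2n/3 − 1` but contains no `k` pairwise
vertex-disjoint directed cycles each of order at least `3`. -/
theorem stmt16 (k : ℕ) (hk : 1 ≤ k) :
    Fintype.card (Fin (2 * k - 1) ⊕ Fin (k + 1)) = 3 * k ∧
    minSemiDeg (D2 k) = 2 * k - 1 ∧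
    (2 * (k : ℚ) - 1 = 2 * (3 * (k : ℚ)) / 3 - 1) ∧
    ¬ ∃ c : Fin k → List (Fin (2 * k - 1) ⊕ Fin (k + 1)),
        (∀ i, IsDicycle (D2 k) (c i) ∧ 3 ≤ (c i).length) ∧
        (∀ i j, i ≠ j → ∀ v ∈ c i, v ∉ c j) := by
  refine ⟨by simp only [Fintype.card_sum, Fintype.card_fin]; omega, minSemiDeg_D2 k hk, by ring,
    ?_⟩
  rintro ⟨c, hc, hdisj⟩
  have h := two_mul_card_le_of_disjoint_dicycles (not_D2_of_notMem_map_inl k) c hc hdisj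
  rw [Finset.card_map, Finset.card_univ, Fintype.card_fin, Fintype.card_fin] at h
  omega
end
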